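/- Let $X$ be a normal pseudomanifold of dimension $d \geq 2$ which is not the standard $d$-sphere $S^d_{d+2}$. Then any two vertices of degree $d+1$ in $X$ are non-adjacent in the edge graph of $X$. -/

import Mathlib

open Finset

noncomputable section

attribute [local instance] Classical.propDecidable

variable {V : Type} [DecidableEq V]

/-- A (finite abstract) simplicial complex: a finite family of nonempty finite sets (faces)
closed under taking nonempty subsets. -/
def IsComplex (K : Finset (Finset V)) : Prop :=
  (∀ s ∈ K, s.Nonempty) ∧ ∀ s ∈ K, ∀ t ⊆ s, t.Nonempty → t ∈ K

/-- The vertex set of a complex: the union of its faces. -/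
def vertexSet (K : Finset (Finset V)) : Finset V := K.sup id

/-- A facet is a maximal face. -/
def IsFacet (K : Finset (Finset V)) (s : Finset V) : Prop :=
  s ∈ K ∧ ∀ t ∈ K, s ⊆ t → s = t

/-- A complex is pure of dimension `d` if it is nonempty and every facet has `d + 1` vertices. -/
def IsPure (K : Finset (Finset V)) (d : ℕ) : Prop :=
  K.Nonempty ∧ ∀ s, IsFacet K s → s.card = d + 1

/-- The edge graph (1-skeleton) of a complex. -/
def edgeGraph (K : Finset (Finset V)) : SimpleGraph V where
  Adj x y := x ≠ y ∧ ({x, y} : Finset V) ∈ K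
  symm := by
    constructor
    intro x y h
    refine ⟨h.1.symm, ?_⟩
    rw [Finset.pair_comm]
    exact h.2
  loopless := by
    constructor
    intro x h
    exact h.1 rfl

/-- A complex is connected if it has a vertex and any two of its vertices are joined by a
path in its edge graph. -/
def CConnected (K : Finset (Finset V)) : Prop :=
  (vertexSet K).Nonempty ∧
    ∀ u ∈ vertexSet K, ∀ v ∈ vertexSet K, (edgeGraph K).Reachable u v

/-- The link of a face `α`: all faces `β` disjoint from `α` with `α ∪ β` a face. -/
def link (K : Finset (Finset V)) (α : Finset V) : Finset (Finset V) :=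
  K.filter fun β => Disjoint α β ∧ α ∪ β ∈ K

/-- The number of edges (1-dimensional faces) of a complex. -/
def edgeCount (K : Finset (Finset V)) : ℕ := (K.filter fun s => s.card = 2).card

/-- A weak pseudomanifold of dimension `d`: a pure `d`-dimensional complex in which every
`(d-1)`-dimensional face lies in exactly two facets. -/
def IsWeakPM (K : Finset (Finset V)) (d : ℕ) : Prop :=
  IsComplex K ∧ IsPure K d ∧
    ∀ s ∈ K, s.card = d → (K.filter fun t => IsFacet K t ∧ s ⊆ t).card = 2

/-- A normal `d`-pseudomanifold: a connected weak pseudomanifold of dimension `d` in which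
the link of every face of dimension at most `d - 2` is connected. -/
def IsNormalPM (K : Finset (Finset V)) (d : ℕ) : Prop :=
  IsWeakPM K d ∧ CConnected K ∧
    ∀ s ∈ K, s.card ≤ d - 1 → CConnected (link K s)

/-- The standard `d`-sphere: the complex of all nonempty proper subsets of a `(d+2)`-set. -/
def IsStandardSphere (K : Finset (Finset V)) (d : ℕ) : Prop :=
  ∃ A : Finset V, A.card = d + 2 ∧ K = A.powerset.filter fun s => s.Nonempty ∧ s ≠ A

/-- `StarringOf X Y` : `Y` is obtained from `X` by starring a new vertex `v` in a facet
`σ` of `X`, i.e. by replacing the facet `σ` with the cone with apex `v` over its boundary. -/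
def StarringOf (X Y : Finset (Finset V)) : Prop :=
  ∃ (σ : Finset V) (v : V), IsFacet X σ ∧ v ∉ vertexSet X ∧
    Y = X.erase σ ∪ (σ.powerset.filter fun τ => τ ≠ σ).image fun τ => insert v τ

/-- A stacked `d`-sphere: a complex obtained from the standard `d`-sphere by a finite
sequence of starrings. -/
def IsStackedSphere (K : Finset (Finset V)) (d : ℕ) : Prop :=
  ∃ S : Finset (Finset V), IsStandardSphere S d ∧ Relation.ReflTransGen StarringOf S K

/-- The induced subcomplex on a set `U` of vertices. -/
def induced (K : Finset (Finset V)) (U : Finset V) : Finset (Finset V) :=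
  K.filter fun s => s ⊆ U

/-- The simplicial complement of the induced subcomplex on `U`: the induced subcomplex on
the complementary set of vertices. -/
def simpComplement (K : Finset (Finset V)) (U : Finset V) : Finset (Finset V) :=
  induced K (vertexSet K \ U)

/-- The degree of a vertex: the number of vertices of its link. -/
def vertDegree (K : Finset (Finset V)) (v : V) : ℕ := (vertexSet (link K {v})).card

/-- `farApart G x y` : the distance from `x` to `y` in the graph `G` is at least `3`
(where unreachable counts as infinite distance). -/
def farApart (G : SimpleGraph V) (x y : V) : Prop :=
  x ≠ y ∧ ¬ G.Adj x y ∧ ∀ z : V, ¬ (G.Adj x z ∧ G.Adj z y)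

/-- `Admissible X σ₁ σ₂ ψ` : `σ₁, σ₂` are disjoint facets of `X` and `ψ` restricts to a
bijection from `σ₁` onto `σ₂` moving every `x ∈ σ₁` to distance at least 3 from itself. -/
def Admissible (X : Finset (Finset V)) (σ₁ σ₂ : Finset V) (ψ : V → V) : Prop :=
  IsFacet X σ₁ ∧ IsFacet X σ₂ ∧ Disjoint σ₁ σ₂ ∧ Set.BijOn ψ ↑σ₁ ↑σ₂ ∧
    ∀ x ∈ σ₁, farApart (edgeGraph X) x (ψ x)

/-- Elementary handle addition `X^ψ`: remove the two facets `σ₁, σ₂` and identify each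
`x ∈ σ₁` with `ψ x ∈ σ₂`. -/
def handleAdd (X : Finset (Finset V)) (σ₁ σ₂ : Finset V) (ψ : V → V) :
    Finset (Finset V) :=
  ((X.erase σ₁).erase σ₂).image fun s => s.image fun x => if x ∈ σ₁ then ψ x else x

/-- Isomorphism of simplicial complexes: an injection on vertices carrying the faces of one
complex exactly onto the faces of the other. -/
def CplxIso {W : Type} [DecidableEq W] (K : Finset (Finset V)) (L : Finset (Finset W)) :
    Prop :=
  ∃ f : V → W, Set.InjOn f ↑(vertexSet K) ∧ L = K.image fun s => s.image f

/-- The connected component of the complex `K` containing the vertex `v` (as a subcomplex). -/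
def componentOf (K : Finset (Finset V)) (v : V) : Finset (Finset V) :=
  K.filter fun s => ∀ x ∈ s, (edgeGraph K).Reachable v x

/-- The edges of `M` having exactly one end in `A`. -/
def crossEdges (M : Finset (Finset V)) (A : Finset V) : Finset (Finset V) :=
  M.filter fun e => e.card = 2 ∧ (e ∩ A).card = 1

/-- The graph whose vertices are the edges of `M` with exactly one end in `A`, two of them
being adjacent when the union of the corresponding edges is a 2-dimensional face of `M`. -/
def crossGraph (M : Finset (Finset V)) (A : Finset V) : SimpleGraph (Finset V) where
  Adj e f := e ≠ f ∧ e ∈ crossEdges M A ∧ f ∈ crossEdges M A ∧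
    e ∪ f ∈ M ∧ (e ∪ f).card = 3
  symm := by
    constructor
    intro e f h
    obtain ⟨h1, h2, h3, h4, h5⟩ := h
    exact ⟨h1.symm, h3, h2, by rwa [Finset.union_comm], by rwa [Finset.union_comm]⟩
  loopless := by
    constructor
    intro e h
    exact h.1 rfl

/-- The class `𝒦(d)`: normal `d`-pseudomanifolds all of whose vertex links are stacked
`(d-1)`-spheres. -/
def InClassK (K : Finset (Finset V)) (d : ℕ) : Prop :=
  IsNormalPM K d ∧ ∀ v ∈ vertexSet K, IsStackedSphere (link K {v}) (d - 1)

/-- The total number of partitions of `n`. -/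
def numPartitions (n : ℕ) : ℕ := Fintype.card (Nat.Partition n)

/-- The number of even partitions of `n` (those with an even number of even parts). -/
def numEvenPartitions (n : ℕ) : ℕ :=
  Fintype.card {p : Nat.Partition n // Even (Multiset.card (p.parts.filter fun i => Even i))}

/-- The number of odd partitions of `n` (those with an odd number of even parts). -/
def numOddPartitions (n : ℕ) : ℕ :=
  Fintype.card {p : Nat.Partition n // Odd (Multiset.card (p.parts.filter fun i => Even i))}

/-- The facets of `N^{d+1}_{m+d+1}` : the sets of `d+2` consecutive integers inside
`{1, …, m+d+1}`. -/
def NFacets (d m : ℕ) : Finset (Finset ℕ) :=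
  (Finset.Icc 1 m).image fun k => Finset.Icc k (k + d + 1)

/-- The complex `N^{d+1}_{m+d+1}` on vertex set `{1, …, m+d+1}` whose facets are the sets
of `d+2` consecutive integers. -/
def Ncomplex (d m : ℕ) : Finset (Finset ℕ) :=
  ((NFacets d m).biUnion Finset.powerset).filter fun s => s.Nonempty

/-- The facets of the boundary complex `∂N^{d+1}_{m+d+1}` : the `(d+1)`-element subsets of
`{1, …, m+d+1}` contained in exactly one facet of `N^{d+1}_{m+d+1}`. -/
def boundaryNFacets (d m : ℕ) : Finset (Finset ℕ) :=
  (Finset.Icc 1 (m + d + 1)).powerset.filter fun s =>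
    s.card = d + 1 ∧ ((Finset.Icc 1 m).filter fun k => s ⊆ Finset.Icc k (k + d + 1)).card = 1

/-- The boundary complex `∂N^{d+1}_{m+d+1}`. -/
def boundaryN (d m : ℕ) : Finset (Finset ℕ) :=
  ((boundaryNFacets d m).biUnion Finset.powerset).filter fun s => s.Nonempty

/-!
The link of a vertex of degree `d + 1` is a weak `(d-1)`-pseudomanifold on `d + 1` vertices,
and for `d ≥ 2` such a complex is the boundary of the simplex on its vertex set `A`. If `u` and
`v` are adjacent vertices of degree `d + 1`, then `A \ {v}` is a proper subset of the vertices
of the link of `v` (it misses `u`), so `A` is a face and `X` contains the boundary of the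
`(d+1)`-simplex on `B = A ∪ {u}`. By induction on the dimension through vertex links, which are
connected in a normal pseudomanifold, no edge leaves such a copy of `∂B`; since `X` is connected
its vertex set is `B`, and `X = ∂B` is the standard sphere.
-/

lemma mem_vertexSet {K : Finset (Finset V)} {v : V} : v ∈ vertexSet K ↔ ∃ s ∈ K, v ∈ s := by
  simp [vertexSet, Finset.mem_sup]

lemma subset_vertexSet {K : Finset (Finset V)} {s : Finset V} (hs : s ∈ K) :
    s ⊆ vertexSet K :=
  fun _ hv => mem_vertexSet.2 ⟨s, hs, hv⟩

lemma mem_vertexSet_of_adj {K : Finset (Finset V)} {u v : V} (h : (edgeGraph K).Adj u v) :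
    u ∈ vertexSet K :=
  mem_vertexSet.2 ⟨_, h.2, mem_insert_self u {v}⟩

lemma edgeGraph_mono {K L : Finset (Finset V)} (h : K ⊆ L) : edgeGraph K ≤ edgeGraph L :=
  fun _ _ hxy => ⟨hxy.1, h hxy.2⟩

lemma exists_isFacet_superset {K : Finset (Finset V)} {s : Finset V} (hs : s ∈ K) :
    ∃ t, IsFacet K t ∧ s ⊆ t := by
  obtain ⟨t, ht, hmax⟩ := (K.filter fun t => s ⊆ t).exists_max_image card ⟨s, by simp [hs]⟩
  rw [mem_filter] at ht
  exact ⟨t, ⟨ht.1, fun t' ht' htt' =>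
    eq_of_subset_of_card_le htt' (hmax t' (mem_filter.2 ⟨ht', ht.2.trans htt'⟩))⟩, ht.2⟩

lemma SimpleGraph.Reachable.mem_of_forall_adj {W : Type*} {G : SimpleGraph W} {S : Set W}
    (hS : ∀ x ∈ S, ∀ y, G.Adj x y → y ∈ S) {a b : W} (h : G.Reachable a b) (ha : a ∈ S) :
    b ∈ S := by
  rw [SimpleGraph.reachable_iff_reflTransGen] at h
  induction h with
  | refl => exact ha
  | tail _ hadj ih => exact hS _ ih _ hadj

section Complex

variable {K : Finset (Finset V)}

lemma IsPure.card_le {d : ℕ} (hp : IsPure K d) {s : Finset V} (hs : s ∈ K) :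
    s.card ≤ d + 1 := by
  obtain ⟨t, ht, hst⟩ := exists_isFacet_superset hs
  exact (card_le_card hst).trans (hp.2 t ht).le

lemma IsPure.isFacet_of_card {d : ℕ} (hp : IsPure K d) {s : Finset V} (hs : s ∈ K)
    (hc : s.card = d + 1) : IsFacet K s :=
  ⟨hs, fun _ ht hst => eq_of_subset_of_card_le hst ((hp.card_le ht).trans hc.ge)⟩

lemma IsComplex.singleton_mem (hK : IsComplex K) {v : V} (hv : v ∈ vertexSet K) :
    ({v} : Finset V) ∈ K := by
  obtain ⟨s, hs, hvs⟩ := mem_vertexSet.1 hv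
  exact hK.2 s hs {v} (singleton_subset_iff.2 hvs) (singleton_nonempty v)

lemma mem_link {α β : Finset V} : β ∈ link K α ↔ β ∈ K ∧ Disjoint α β ∧ α ∪ β ∈ K := by
  simp [link]

lemma link_subset (α : Finset V) : link K α ⊆ K :=
  filter_subset _ _

lemma isComplex_link (hK : IsComplex K) (α : Finset V) : IsComplex (link K α) := by
  refine ⟨fun s hs => hK.1 s (link_subset α hs), fun s hs t hts htne => ?_⟩
  rw [mem_link] at hs ⊢
  exact ⟨hK.2 s hs.1 t hts htne, hs.2.1.mono_right hts,
    hK.2 _ hs.2.2 _ (union_subset_union_right hts) (htne.mono subset_union_right)⟩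

lemma IsComplex.link_link (hK : IsComplex K) {α β : Finset V} (hαβ : Disjoint α β) :
    link (link K α) β = link K (α ∪ β) := by
  ext γ
  simp only [mem_link, disjoint_union_left, union_assoc]
  constructor
  · rintro ⟨⟨hγ, hαγ, -⟩, hβγ, -, -, h⟩
    exact ⟨hγ, ⟨hαγ, hβγ⟩, h⟩
  · rintro ⟨hγ, ⟨hαγ, hβγ⟩, h⟩
    have hne := hK.1 γ hγ
    exact ⟨⟨hγ, hαγ, hK.2 _ h _ (union_subset_union_right subset_union_right)
        (hne.mono subset_union_right)⟩,
      hβγ, hK.2 _ h _ subset_union_right (hne.mono subset_union_right),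
      disjoint_union_right.2 ⟨hαβ, hαγ⟩, h⟩

lemma IsComplex.mem_vertexSet_link (hK : IsComplex K) {s : Finset V} {z : V} :
    z ∈ vertexSet (link K s) ↔ z ∉ s ∧ insert z s ∈ K := by
  constructor
  · intro hz
    obtain ⟨β, hβ, hzβ⟩ := mem_vertexSet.1 hz
    obtain ⟨-, hsβ, hsβK⟩ := mem_link.1 hβ
    refine ⟨hsβ.notMem_of_mem_right_finset hzβ, hK.2 _ hsβK _ ?_ (insert_nonempty z s)⟩
    exact insert_subset (mem_union_right s hzβ) subset_union_left
  · rintro ⟨hzs, hK'⟩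
    refine mem_vertexSet.2 ⟨{z}, mem_link.2 ⟨?_, ?_, ?_⟩, mem_singleton_self z⟩
    · exact hK.2 _ hK' _ (singleton_subset_iff.2 (mem_insert_self z s)) (singleton_nonempty z)
    · exact disjoint_singleton_right.2 hzs
    · rwa [union_singleton]

lemma IsComplex.mem_vertexSet_link_singleton (hK : IsComplex K) {u z : V} :
    z ∈ vertexSet (link K {u}) ↔ (edgeGraph K).Adj u z := by
  rw [hK.mem_vertexSet_link, mem_singleton, pair_comm]
  exact and_congr_left' ne_comm

lemma IsComplex.card_vertexSet_link_eq_card_facets {d : ℕ} (hK : IsComplex K) (hp : IsPure K d)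
    {s : Finset V} (hs : s.card = d) :
    (vertexSet (link K s)).card = (K.filter fun t => IsFacet K t ∧ s ⊆ t).card := by
  refine card_nbij (fun z => insert z s) (fun z hz => ?_) (fun z hz z' hz' h => ?_) ?_
  · obtain ⟨hzs, hzK⟩ := hK.mem_vertexSet_link.1 hz
    refine mem_filter.2 ⟨hzK, hp.isFacet_of_card hzK ?_, subset_insert z s⟩
    rw [card_insert_of_notMem hzs, hs]
  · exact (insert_inj (hK.mem_vertexSet_link.1 hz).1).1 h
  · intro t ht
    obtain ⟨htK, htF, hst⟩ := mem_filter.1 ht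
    obtain ⟨z, hz⟩ : ∃ z, t \ s = {z} := card_eq_one.1 (by
      rw [card_sdiff_of_subset hst, hp.2 t htF, hs]; omega)
    have hzt : insert z s = t := by rw [← union_singleton, ← hz, union_sdiff_of_subset hst]
    have hzs : z ∉ s := (mem_sdiff.1 (hz ▸ mem_singleton_self z)).2
    exact ⟨z, hK.mem_vertexSet_link.2 ⟨hzs, hzt ▸ htK⟩, hzt⟩

lemma IsWeakPM.card_vertexSet_link {d : ℕ} (hw : IsWeakPM K d) {s : Finset V} (hs : s ∈ K)
    (hc : s.card = d) : (vertexSet (link K s)).card = 2 := by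
  rw [hw.1.card_vertexSet_link_eq_card_facets hw.2.1 hc, hw.2.2 s hs hc]

lemma IsPure.exists_mem_link_superset {d : ℕ} (hK : IsComplex K) (hp : IsPure K (d + 1))
    {x : V} {β : Finset V} (hxβ : x ∉ β) (hβ : insert x β ∈ K) :
    ∃ t ∈ link K {x}, β ⊆ t ∧ t.card = d + 1 := by
  obtain ⟨F, hF, hxβF⟩ := exists_isFacet_superset hβ
  have hxF : x ∈ F := hxβF (mem_insert_self x β)
  have hcard : (F.erase x).card = d + 1 := by
    rw [card_erase_of_mem hxF, hp.2 F hF]; rfl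
  refine ⟨F.erase x, mem_link.2 ⟨?_, ?_, ?_⟩, ?_, hcard⟩
  · exact hK.2 F hF.1 _ (erase_subset x F) (card_pos.1 (by omega))
  · exact disjoint_singleton_left.2 (notMem_erase x F)
  · rw [← insert_eq, insert_erase hxF]; exact hF.1
  · exact subset_erase.2 ⟨(subset_insert x β).trans hxβF, hxβ⟩

lemma isPure_link {d : ℕ} (hK : IsComplex K) (hp : IsPure K (d + 1)) {x : V}
    (hx : x ∈ vertexSet K) : IsPure (link K {x}) d := by
  refine ⟨?_, fun τ ⟨hτ, hτmax⟩ => ?_⟩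
  · obtain ⟨t, ht, -⟩ := hp.exists_mem_link_superset hK (notMem_empty x)
      (by simpa using hK.singleton_mem hx)
    exact ⟨t, ht⟩
  · obtain ⟨-, hxτ, hxτK⟩ := mem_link.1 hτ
    rw [← insert_eq] at hxτK
    obtain ⟨t, ht, hτt, htc⟩ :=
      hp.exists_mem_link_superset hK (disjoint_singleton_left.1 hxτ) hxτK
    rw [hτmax t ht hτt, htc]

lemma isWeakPM_link {d : ℕ} (hw : IsWeakPM K (d + 1)) {x : V} (hx : x ∈ vertexSet K) :
    IsWeakPM (link K {x}) d := by
  have hpL : IsPure (link K {x}) d := isPure_link hw.1 hw.2.1 hx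
  refine ⟨isComplex_link hw.1 _, hpL, fun s hs hc => ?_⟩
  obtain ⟨-, hxs, hxsK⟩ := mem_link.1 hs
  rw [← (isComplex_link hw.1 _).card_vertexSet_link_eq_card_facets hpL hc, hw.1.link_link hxs,
    hw.card_vertexSet_link hxsK (by rw [card_union_of_disjoint hxs, card_singleton, hc]; omega)]

lemma isNormalPM_link {d : ℕ} (hX : IsNormalPM K (d + 2)) {x : V} (hx : x ∈ vertexSet K) :
    IsNormalPM (link K {x}) (d + 1) := by
  refine ⟨isWeakPM_link hX.1 hx, hX.2.2 {x} (hX.1.1.singleton_mem hx) (by simp), fun s hs hc => ?_⟩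
  obtain ⟨-, hxs, hxsK⟩ := mem_link.1 hs
  rw [hX.1.1.link_link hxs]
  exact hX.2.2 _ hxsK (by rw [card_union_of_disjoint hxs, card_singleton]; omega)

end Complex

def ContainsSimplexBoundary (K : Finset (Finset V)) (B : Finset V) : Prop :=
  ∀ s ⊆ B, s.Nonempty → s ≠ B → s ∈ K

section SimplexBoundary

variable {K : Finset (Finset V)} {B : Finset V}

lemma ContainsSimplexBoundary.adj (hB : ContainsSimplexBoundary K B) (hBc : 2 < B.card)
    {x y : V} (hx : x ∈ B) (hy : y ∈ B) (hxy : x ≠ y) : (edgeGraph K).Adj x y := by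
  refine ⟨hxy, hB _ (insert_subset hx (singleton_subset_iff.2 hy)) (insert_nonempty _ _) ?_⟩
  rintro h
  rw [← h, card_pair hxy] at hBc
  omega

lemma ContainsSimplexBoundary.link_erase (hB : ContainsSimplexBoundary K B) {x : V} (hx : x ∈ B) :
    ContainsSimplexBoundary (link K {x}) (B.erase x) := by
  intro s hsB hsne hsB'
  have hxs : x ∉ s := fun h => notMem_erase x B (hsB h)
  refine mem_link.2 ⟨hB s (hsB.trans (erase_subset x B)) hsne ?_, disjoint_singleton_left.2 hxs, ?_⟩
  · rintro rfl
    exact hxs hx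
  · rw [← insert_eq]
    refine hB _ (insert_subset hx (hsB.trans (erase_subset x B))) (insert_nonempty x s) ?_
    rintro h
    exact hsB' (by rw [← h, erase_insert hxs])

lemma ContainsSimplexBoundary.insert {u : V} {A : Finset V}
    (hA : ContainsSimplexBoundary (link K {u}) A)
    (hAK : A ∈ K) (huA : u ∉ A) (hu : ({u} : Finset V) ∈ K) :
    ContainsSimplexBoundary K (insert u A) := by
  intro s hs hsne hsuA
  by_cases hus : u ∈ s
  · rcases (s.erase u).eq_empty_or_nonempty with hempty | hne
    · rwa [← insert_erase hus, hempty]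
    · have hsA : s.erase u ⊆ A := by
        rw [← erase_insert huA]; exact erase_subset_erase u hs
      have hmem := (mem_link.1 (hA _ hsA hne fun h => hsuA (by rw [← h, insert_erase hus]))).2.2
      rwa [← insert_eq, insert_erase hus] at hmem
  · have hsA : s ⊆ A := (subset_insert_iff_of_notMem hus).1 hs
    rcases eq_or_ne s A with rfl | hsA'
    · exact hAK
    · exact link_subset _ (hA s hsA hsne hsA')

lemma isStandardSphere_of_containsSimplexBoundary {d : ℕ} (hK : IsComplex K) (hp : IsPure K d)
    (hB : ContainsSimplexBoundary K B) (hBc : B.card = d + 2) (hV : vertexSet K ⊆ B) :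
    IsStandardSphere K d := by
  refine ⟨B, hBc, ext fun s => ⟨fun hs => ?_, fun hs => ?_⟩⟩
  · refine mem_filter.2 ⟨mem_powerset.2 ((subset_vertexSet hs).trans hV), hK.1 s hs, ?_⟩
    rintro rfl
    have := hp.card_le hs
    omega
  · obtain ⟨hsB, hsne, hsB'⟩ := mem_filter.1 hs
    exact hB s (mem_powerset.1 hsB) hsne hsB'

end SimplexBoundary

section PseudomanifoldSphere

variable {K : Finset (Finset V)}

lemma IsWeakPM.containsSimplexBoundary_vertexSet {n : ℕ} (hw : IsWeakPM K (n + 1))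
    (hcard : (vertexSet K).card = n + 3) : ContainsSimplexBoundary K (vertexSet K) := by
  set A := vertexSet K
  obtain ⟨σ, hσ⟩ := hw.2.1.1
  obtain ⟨τ₀, hτ₀, -⟩ := exists_isFacet_superset hσ
  have hτ₀c : τ₀.card = n + 2 := hw.2.1.2 τ₀ hτ₀
  -- Two `(n+2)`-subsets of `A` share an `n`-face `s`; the two facets through `s` lie in `A`,
  -- and `A \ s` leaves room for exactly two of them.
  have hfacet : ∀ τ ⊆ A, τ.card = n + 2 → τ ∈ K := by
    intro τ hτA hτc
    rcases eq_or_ne τ τ₀ with rfl | hne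
    · exact hτ₀.1
    have hsc : (τ ∩ τ₀).card = n + 1 := by
      have hunion : (τ ∪ τ₀).card ≤ n + 3 :=
        hcard ▸ card_le_card (union_subset hτA (subset_vertexSet hτ₀.1))
      have hsum := card_union_add_card_inter τ τ₀
      have hle := card_le_card (inter_subset_left : τ ∩ τ₀ ⊆ τ)
      have hsτ : (τ ∩ τ₀).card ≠ n + 2 := fun h => hne <|
        (eq_of_subset_of_card_le inter_subset_left (by omega)).symm.trans
          (eq_of_subset_of_card_le inter_subset_right (by omega))
      omega
    set s := τ ∩ τ₀
    have hsK : s ∈ K := hw.1.2 τ₀ hτ₀.1 s inter_subset_right (card_pos.1 (by omega))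
    have hlink : vertexSet (link K s) = A \ s := by
      refine eq_of_subset_of_card_le (fun z hz => ?_) ?_
      · obtain ⟨hzs, hzK⟩ := hw.1.mem_vertexSet_link.1 hz
        exact mem_sdiff.2 ⟨subset_vertexSet hzK (mem_insert_self z s), hzs⟩
      · rw [hw.card_vertexSet_link hsK hsc, card_sdiff_of_subset (subset_vertexSet hsK), hcard,
          hsc, Nat.add_sub_add_left]
    obtain ⟨b, hb⟩ : (τ \ s).Nonempty :=
      card_pos.1 (by rw [card_sdiff_of_subset (inter_subset_left : s ⊆ τ), hsc, hτc]; omega)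
    obtain ⟨hbτ, hbs⟩ := mem_sdiff.1 hb
    have hbK := (hw.1.mem_vertexSet_link.1 (hlink ▸ mem_sdiff.2 ⟨hτA hbτ, hbs⟩)).2
    have hτeq : insert b s = τ := eq_of_subset_of_card_le (insert_subset hbτ inter_subset_left)
      (by rw [card_insert_of_notMem hbs]; omega)
    rwa [hτeq] at hbK
  intro s hsA hsne hsA'
  obtain ⟨t, hst, htA, htc⟩ := exists_subsuperset_card_eq (n := n + 2) hsA
    (by have := card_lt_card (ssubset_of_subset_of_ne hsA hsA'); omega) (by omega)
  exact hw.1.2 t (hfacet t htA htc) s hst hsne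

/-- In dimension one a vertex of `B` with a neighbour outside `B` would have three neighbours;
in higher dimension pass to its link, which is connected. -/
lemma IsNormalPM.mem_of_adj {d : ℕ} (hX : IsNormalPM K (d + 1)) {B : Finset V}
    (hB : ContainsSimplexBoundary K B) (hBc : B.card = d + 3) {x y : V} (hx : x ∈ B)
    (hxy : (edgeGraph K).Adj x y) : y ∈ B := by
  induction d generalizing K B x y with
  | zero =>
    by_contra hy
    have hsub : insert y (B.erase x) ⊆ vertexSet (link K {x}) := by
      refine insert_subset (hX.1.1.mem_vertexSet_link_singleton.2 hxy) fun b hb => ?_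
      exact hX.1.1.mem_vertexSet_link_singleton.2
        (hB.adj (by omega) hx (mem_of_mem_erase hb) (ne_of_mem_erase hb).symm)
    have := card_le_card hsub
    rw [card_insert_of_notMem (fun h => hy (mem_of_mem_erase h)), card_erase_of_mem hx,
      hX.1.card_vertexSet_link (hX.1.1.singleton_mem (mem_vertexSet_of_adj hxy))
        (card_singleton x)] at this
    omega
  | succ d ih =>
    have hL := isNormalPM_link hX (mem_vertexSet_of_adj hxy)
    obtain ⟨b, hb⟩ : (B.erase x).Nonempty := card_pos.1 (by rw [card_erase_of_mem hx]; omega)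
    have hbL : b ∈ vertexSet (link K {x}) := hX.1.1.mem_vertexSet_link_singleton.2
      (hB.adj (by omega) hx (mem_of_mem_erase hb) (ne_of_mem_erase hb).symm)
    have hyL : y ∈ vertexSet (link K {x}) := hX.1.1.mem_vertexSet_link_singleton.2 hxy
    have hBL := hB.link_erase hx
    have hBLc : (B.erase x).card = d + 3 := by rw [card_erase_of_mem hx]; omega
    exact mem_of_mem_erase <| (hL.2.1.2 b hbL y hyL).mem_of_forall_adj
      (fun x' hx' y' hx'y' => ih hL hBL hBLc hx' hx'y') hb

/-- `A \ {v}` lies in the vertex set of the link of `v` and misses `u`, so it is a face of that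
link. -/
lemma vertexSet_link_mem_of_adj (hK : IsComplex K) {u v : V}
    (hu : ContainsSimplexBoundary (link K {u}) (vertexSet (link K {u})))
    (hv : ContainsSimplexBoundary (link K {v}) (vertexSet (link K {v})))
    (huv : (edgeGraph K).Adj u v) (hcard : 2 < (vertexSet (link K {u})).card) :
    vertexSet (link K {u}) ∈ K := by
  set A := vertexSet (link K {u})
  have hvA : v ∈ A := hK.mem_vertexSet_link_singleton.2 huv
  have hsub : A.erase v ⊆ vertexSet (link K {v}) := fun a ha =>
    hK.mem_vertexSet_link_singleton.2 <| edgeGraph_mono (link_subset _) <|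
      hu.adj hcard hvA (mem_of_mem_erase ha) (ne_of_mem_erase ha).symm
  have huA : u ∉ A.erase v := fun h =>
    (hK.mem_vertexSet_link.1 (mem_of_mem_erase h)).1 (mem_singleton_self u)
  have hmem := hv _ hsub (card_pos.1 (by rw [card_erase_of_mem hvA]; omega))
    fun h => huA (h ▸ hK.mem_vertexSet_link_singleton.2 huv.symm)
  rw [mem_link, ← insert_eq, insert_erase hvA] at hmem
  exact hmem.2.2

end PseudomanifoldSphere

theorem stmt7_general {V : Type} [DecidableEq V] (d : ℕ) (hd : 2 ≤ d)
    (X : Finset (Finset V)) (hX : IsNormalPM X d) (hns : ¬ IsStandardSphere X d)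
    (u v : V)
    (hdu : vertDegree X u = d + 1) (hdv : vertDegree X v = d + 1) :
    ¬ (edgeGraph X).Adj u v := by
  intro huv
  obtain ⟨n, rfl⟩ := Nat.exists_eq_add_of_le' hd
  have hK := hX.1.1
  have hlink : ∀ w ∈ vertexSet X, vertDegree X w = n + 3 →
      ContainsSimplexBoundary (link X {w}) (vertexSet (link X {w})) := fun w hw hdeg =>
    (isWeakPM_link hX.1 hw).containsSimplexBoundary_vertexSet hdeg
  have hu := mem_vertexSet_of_adj huv
  have hAu := hlink u hu hdu
  set A := vertexSet (link X {u})
  have hAc : A.card = n + 3 := hdu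
  have hAX : A ∈ X := vertexSet_link_mem_of_adj hK hAu
    (hlink v (mem_vertexSet_of_adj huv.symm) hdv) huv (by change 2 < A.card; omega)
  have huA : u ∉ A := fun h => (hK.mem_vertexSet_link.1 h).1 (mem_singleton_self u)
  have hB := hAu.insert hAX huA (hK.singleton_mem hu)
  have hBc : (insert u A).card = n + 4 := by rw [card_insert_of_notMem huA, hAc]
  have hV : vertexSet X ⊆ insert u A := fun w hw =>
    (hX.2.1.2 u hu w hw).mem_of_forall_adj (fun _ hx _ hxy => hX.mem_of_adj hB hBc hx hxy)
      (mem_insert_self u A)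
  exact hns (isStandardSphere_of_containsSimplexBoundary hK hX.1.2.1 hB hBc hV)

/-- In a normal `d`-pseudomanifold (`d ≥ 2`) other than the standard `d`-sphere, any two
vertices of degree `d+1` are non-adjacent. -/
theorem stmt7 {V : Type} [DecidableEq V] (d : ℕ) (hd : 2 ≤ d)
    (X : Finset (Finset V)) (hX : IsNormalPM X d) (hns : ¬ IsStandardSphere X d)
    (u v : V) (hu : u ∈ vertexSet X) (hv : v ∈ vertexSet X)
    (hdu : vertDegree X u = d + 1) (hdv : vertDegree X v = d + 1) :
    ¬ (edgeGraph X).Adj u v :=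
  stmt7_general d hd X hX hns u v hdu hdv

end
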